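/- arXiv:math/9912108 — 2 statements merged into one kernel-verified Lean document; each statement's English description precedes it below -/
import Mathlib

section
/- Let J be a nonempty finite set of positive integers and Φ = {β ∈ ℚ : 0 < β ≤ 1 and β·v ∈ ℤ for some v ∈ J}. Suppose β′ ∈ Φ ∪ {0} and β ∈ Φ satisfy β′ < β and no element of Φ lies strictly between β′ and β; write β = p/n in lowest terms. Then for every v ∈ J: if n ∣ v then ⌊β′·v⌋ = ⌊β·v⌋ − 1, and if n ∤ v then ⌊β′·v⌋ = ⌊β·v⌋, where ⌊·⌋ denotes the integer floor of a rational number. -/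
/-! Since every positive fraction `m / v` below `β` lies in `Φ`, no such fraction falls strictly
between `β'` and `β`; hence `⌊β' v⌋ = ⌈β v⌉ - 1`. The ceiling equals the floor exactly when
`β v` is an integer, that is, when the denominator of `β` divides `v`. -/

theorem Int.floor_eq_ceil_sub_one_of_forall_intCast_le {R : Type*} [Ring R] [LinearOrder R]
    [IsStrictOrderedRing R] [FloorRing R] {x y : R} (hx : 0 ≤ x) (hxy : x < y)
    (hgap : ∀ m : ℤ, 0 < m → (m : R) < y → (m : R) ≤ x) : ⌊x⌋ = ⌈y⌉ - 1 := by
  refine le_antisymm (by linarith [Int.floor_lt_ceil_of_lt hxy]) (Int.le_floor.2 ?_)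
  rcases lt_or_ge 0 (⌈y⌉ - 1) with hpos | hnonpos
  · exact hgap _ hpos (by push_cast; exact sub_lt_iff_lt_add.2 (Int.ceil_lt_add_one y))
  · exact (Int.cast_nonpos.2 hnonpos).trans hx

theorem Rat.mul_natCast_mem_range_intCast_iff (q : ℚ) (v : ℕ) :
    q * v ∈ Set.range ((↑) : ℤ → ℚ) ↔ q.den ∣ v := by
  constructor
  · rintro ⟨m, hm⟩
    have hnum : q.num * v = m * q.den := by
      have : (q.num : ℚ) * v = m * q.den := by
        rw [hm, ← Rat.mul_den_eq_num]; ring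
      exact_mod_cast this
    have : (q.den : ℤ) ∣ q.num * v := ⟨m, by rw [hnum, mul_comm]⟩
    exact Int.natCast_dvd_natCast.1 ((Rat.isCoprime_num_den q).symm.dvd_of_dvd_mul_left this)
  · rintro ⟨t, rfl⟩
    exact ⟨q.num * t, by push_cast; rw [← mul_assoc, Rat.mul_den_eq_num]⟩

theorem stmt6_general (J : Finset ℕ) (hJpos : ∀ v ∈ J, 0 < v)
    (β' β : ℚ)
    (hβ' : β' ∈ insert (0 : ℚ)
      {γ : ℚ | 0 < γ ∧ γ ≤ 1 ∧ ∃ v ∈ J, ∃ m : ℤ, γ * (v : ℚ) = (m : ℚ)})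
    (hβ : β ∈ {γ : ℚ | 0 < γ ∧ γ ≤ 1 ∧ ∃ v ∈ J, ∃ m : ℤ, γ * (v : ℚ) = (m : ℚ)})
    (hlt : β' < β)
    (hgap : ∀ γ ∈ {γ : ℚ | 0 < γ ∧ γ ≤ 1 ∧ ∃ v ∈ J, ∃ m : ℤ, γ * (v : ℚ) = (m : ℚ)},
      ¬(β' < γ ∧ γ < β)) :
    ∀ v ∈ J,
      (β.den ∣ v → ⌊β' * (v : ℚ)⌋ = ⌊β * (v : ℚ)⌋ - 1) ∧
      (¬β.den ∣ v → ⌊β' * (v : ℚ)⌋ = ⌊β * (v : ℚ)⌋) := by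
  intro v hv
  have hv0 : (0 : ℚ) < v := by exact_mod_cast hJpos v hv
  have hβ'0 : 0 ≤ β' := by
    rcases hβ' with rfl | h
    exacts [le_rfl, h.1.le]
  have hnoint : ∀ m : ℤ, 0 < m → (m : ℚ) < β * v → (m : ℚ) ≤ β' * v := by
    intro m hm hmβ
    rw [← div_lt_iff₀ hv0] at hmβ
    rw [← div_le_iff₀ hv0]
    refine not_lt.1 fun hβ'm => hgap (m / v) ⟨by positivity, hmβ.le.trans hβ.2.1, v, hv, m, ?_⟩
      ⟨hβ'm, hmβ⟩
    field_simp
  have hfloor : ⌊β' * v⌋ = ⌈β * v⌉ - 1 :=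
    Int.floor_eq_ceil_sub_one_of_forall_intCast_le (by positivity)
      (mul_lt_mul_of_pos_right hlt hv0) hnoint
  rw [hfloor, ← Rat.mul_natCast_mem_range_intCast_iff]
  refine ⟨fun ⟨m, hm⟩ => ?_, fun hm => ?_⟩
  · rw [← hm, Int.ceil_intCast, Int.floor_intCast]
  · rw [(Int.ceil_eq_floor_add_one_iff_notMem _).2 hm, add_sub_cancel_right]

/-- Equation (4.27) of the paper: if `β' < β` are consecutive elements of `Φ ∪ {0}`
(with `Φ` as in equation (2.18)) and `β = p/n` in lowest terms, then for `v ∈ J`,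
`⌊β'v⌋ = ⌊βv⌋ - 1` when `n ∣ v`, and `⌊β'v⌋ = ⌊βv⌋` otherwise. -/
theorem stmt6 (J : Finset ℕ) (hJne : J.Nonempty) (hJpos : ∀ v ∈ J, 0 < v)
    (β' β : ℚ)
    (hβ' : β' ∈ insert (0 : ℚ)
      {γ : ℚ | 0 < γ ∧ γ ≤ 1 ∧ ∃ v ∈ J, ∃ m : ℤ, γ * (v : ℚ) = (m : ℚ)})
    (hβ : β ∈ {γ : ℚ | 0 < γ ∧ γ ≤ 1 ∧ ∃ v ∈ J, ∃ m : ℤ, γ * (v : ℚ) = (m : ℚ)})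
    (hlt : β' < β)
    (hgap : ∀ γ ∈ {γ : ℚ | 0 < γ ∧ γ ≤ 1 ∧ ∃ v ∈ J, ∃ m : ℤ, γ * (v : ℚ) = (m : ℚ)},
      ¬(β' < γ ∧ γ < β)) :
    ∀ v ∈ J,
      (β.den ∣ v → ⌊β' * (v : ℚ)⌋ = ⌊β * (v : ℚ)⌋ - 1) ∧
      (¬β.den ∣ v → ⌊β' * (v : ℚ)⌋ = ⌊β * (v : ℚ)⌋) :=
  stmt6_general J hJpos β' β hβ' hβ hlt hgap
end

section
/- Let J be a nonempty finite set of positive integers, Φ = {β ∈ ℚ : 0 < β ≤ 1 and β·v ∈ ℤ for some v ∈ J}, and let d : ℕ → ℕ vanish outside J. Fix an integer p ≥ 1, and for γ ∈ Φ ∪ {0} set e(p,γ) = (1/2)·∑_{v ∈ J} d(v)·((p−1)·v + ⌊γ·v⌋)·((p−1)·v + ⌊γ·v⌋ + 1) ∈ ℚ and d′(γ) = ∑_{v ∈ J} d(v)·⌊γ·v⌋. Suppose β′ ∈ Φ ∪ {0} and β ∈ Φ satisfy β′ < β with no element of Φ strictly between them, and write β = p₀/n in lowest terms. Then e(p,β)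 = e(p,β′) + ∑_{v ∈ J, n ∣ v} d(v)·((p−1)·v + β·v) and d′(β) = d′(β′) + ∑_{v ∈ J, n ∣ v} d(v). -/
/-- The arithmetic recursions (4.49) and (4.58) of the paper for the quantities
`e(p, β, N)` and `d'(β, N)` of equation (2.24): if `β' < β` are consecutive elements
of `Φ ∪ {0}` and `β = p₀/n` in lowest terms, then
`e(p,β) = e(p,β') + ∑_{v ∈ J, n ∣ v} d(v)((p-1)v + βv)` and
`d'(β) = d'(β') + ∑_{v ∈ J, n ∣ v} d(v)`. -/
theorem stmt7 (J : Finset ℕ) (hJne : J.Nonempty) (hJpos : ∀ v ∈ J, 0 < v)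
    (d : ℕ → ℕ) (hd : ∀ v, v ∉ J → d v = 0) (p : ℤ) (hp : 1 ≤ p)
    (β' β : ℚ)
    (hβ' : β' ∈ insert (0 : ℚ)
      {γ : ℚ | 0 < γ ∧ γ ≤ 1 ∧ ∃ v ∈ J, ∃ m : ℤ, γ * (v : ℚ) = (m : ℚ)})
    (hβ : β ∈ {γ : ℚ | 0 < γ ∧ γ ≤ 1 ∧ ∃ v ∈ J, ∃ m : ℤ, γ * (v : ℚ) = (m : ℚ)})
    (hlt : β' < β)
    (hgap : ∀ γ ∈ {γ : ℚ | 0 < γ ∧ γ ≤ 1 ∧ ∃ v ∈ J, ∃ m : ℤ, γ * (v : ℚ) = (m : ℚ)},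
      ¬(β' < γ ∧ γ < β)) :
    ((1 / 2 : ℚ) * ∑ v ∈ J, (d v : ℚ) *
          (((p : ℚ) - 1) * (v : ℚ) + (⌊β * (v : ℚ)⌋ : ℚ)) *
          (((p : ℚ) - 1) * (v : ℚ) + (⌊β * (v : ℚ)⌋ : ℚ) + 1)
        = (1 / 2 : ℚ) * ∑ v ∈ J, (d v : ℚ) *
            (((p : ℚ) - 1) * (v : ℚ) + (⌊β' * (v : ℚ)⌋ : ℚ)) *
            (((p : ℚ) - 1) * (v : ℚ) + (⌊β' * (v : ℚ)⌋ : ℚ) + 1)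
          + ∑ v ∈ J.filter (fun v => β.den ∣ v), (d v : ℚ) *
              (((p : ℚ) - 1) * (v : ℚ) + β * (v : ℚ))) ∧
    (∑ v ∈ J, (d v : ℤ) * ⌊β * (v : ℚ)⌋
        = ∑ v ∈ J, (d v : ℤ) * ⌊β' * (v : ℚ)⌋
          + ∑ v ∈ J.filter (fun v => β.den ∣ v), (d v : ℤ)) := by
  obtain ⟨hβpos, hβle, _⟩ := hβ
  have hβ'0 : (0:ℚ) ≤ β' := by
    rcases hβ' with h | h
    · exact le_of_eq h.symm
    · exact le_of_lt h.1
  have hmulden : β * (β.den : ℚ) = (β.num : ℚ) := by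
    have hden : ((β.den : ℚ)) ≠ 0 := Nat.cast_ne_zero.mpr β.den_nz
    calc β * (β.den:ℚ) = (β.num:ℚ)/β.den * β.den := by rw [Rat.num_div_den]
      _ = β.num := div_mul_cancel₀ _ hden
  -- if β * v is an integer then β.den ∣ v
  have hint : ∀ v : ℕ, ∀ m : ℤ, β * (v:ℚ) = m → β.den ∣ v := by
    intro v m hm
    have h1 : (β.num : ℚ) * v = m * β.den := by
      have := congrArg (· * (β.den : ℚ)) hm
      calc (β.num : ℚ) * v = β * (β.den : ℚ) * v := by rw [hmulden]
        _ = m * β.den := by rw [mul_comm β (β.den:ℚ), mul_assoc, hm]; ring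
    have h2 : β.num * (v:ℤ) = m * β.den := by exact_mod_cast h1
    have hdvd : (β.den : ℤ) ∣ β.num * v := ⟨m, by rw [h2, mul_comm]⟩
    have hcop : IsCoprime (β.den : ℤ) β.num := by
      rw [Int.isCoprime_iff_gcd_eq_one, Int.gcd]
      simpa [Nat.coprime_comm] using β.reduced
    have : (β.den : ℤ) ∣ (v : ℤ) := (hcop.dvd_of_dvd_mul_left) hdvd
    exact_mod_cast this
  -- if β.den ∣ v then β * v is an integer equal to its floor
  have hintval : ∀ v : ℕ, β.den ∣ v → ((⌊β * (v:ℚ)⌋ : ℚ) = β * (v:ℚ)) := by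
    intro v ⟨k, hk⟩
    have : β * (v:ℚ) = (β.num * k : ℤ) := by
      subst hk; push_cast; rw [← mul_assoc, hmulden]
    rw [this, Int.floor_intCast]
  -- the key floor comparison
  have key : ∀ v ∈ J, ⌊β * (v:ℚ)⌋ = ⌊β' * (v:ℚ)⌋ + (if β.den ∣ v then 1 else 0) := by
    intro v hv
    have hvpos : (0:ℚ) < v := by exact_mod_cast hJpos v hv
    by_cases hdvd : β.den ∣ v
    · rw [if_pos hdvd]
      set m : ℤ := ⌊β * (v:ℚ)⌋ with hm
      have hmv : (m : ℚ) = β * v := hintval v hdvd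
      have hub : β' * v < m := by rw [hmv]; exact mul_lt_mul_of_pos_right hlt hvpos
      have hlb : (m : ℚ) - 1 ≤ β' * v := by
        by_contra hc
        push_neg at hc
        set γ : ℚ := ((m:ℚ) - 1) / v with hγ
        have hγv : γ * v = (m:ℚ) - 1 := by rw [hγ, div_mul_cancel₀ _ (ne_of_gt hvpos)]
        have hβ'γ : β' < γ := by
          rw [hγ, lt_div_iff₀ hvpos]; exact hc
        have hγβ : γ < β := by
          have : γ * v < β * v := by rw [hγv, ← hmv]; linarith
          exact lt_of_mul_lt_mul_right (by linarith) (le_of_lt hvpos)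
        have hγ0 : 0 < γ := lt_of_le_of_lt hβ'0 hβ'γ
        exact hgap γ ⟨hγ0, le_of_lt (lt_of_lt_of_le hγβ hβle),
          v, hv, m - 1, by rw [hγv]; push_cast; ring⟩ ⟨hβ'γ, hγβ⟩
      have : ⌊β' * (v:ℚ)⌋ = m - 1 := by
        rw [Int.floor_eq_iff]
        constructor
        · push_cast; linarith
        · push_cast; linarith
      omega
    · rw [if_neg hdvd, add_zero]
      set k : ℤ := ⌊β * (v:ℚ)⌋ with hk
      have hkne : (k : ℚ) ≠ β * v := by
        intro h
        exact hdvd (hint v k h.symm)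
      have hklt : (k : ℚ) < β * v :=
        lt_of_le_of_ne (Int.floor_le _) hkne
      have hlb : (k : ℚ) ≤ β' * v := by
        by_contra hc
        push_neg at hc
        set γ : ℚ := (k:ℚ) / v with hγ
        have hγv : γ * v = (k:ℚ) := by rw [hγ, div_mul_cancel₀ _ (ne_of_gt hvpos)]
        have hβ'γ : β' < γ := by
          rw [hγ, lt_div_iff₀ hvpos]; exact hc
        have hγβ : γ < β := by
          have : γ * v < β * v := by rw [hγv]; exact hklt
          exact lt_of_mul_lt_mul_right (by linarith) (le_of_lt hvpos)
        have hγ0 : 0 < γ := lt_of_le_of_lt hβ'0 hβ'γ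
        exact hgap γ ⟨hγ0, le_of_lt (lt_of_lt_of_le hγβ hβle),
          v, hv, k, by rw [hγv]⟩ ⟨hβ'γ, hγβ⟩
      have hub : β' * v < (k:ℚ) + 1 := by
        have : β' * v < β * v := mul_lt_mul_of_pos_right hlt hvpos
        have h2 : β * v < (k:ℚ) + 1 := by
          have := Int.lt_floor_add_one (β * (v:ℚ)); exact_mod_cast this
        linarith
      symm
      rw [Int.floor_eq_iff]
      refine ⟨hlb, ?_⟩
      push_cast
      linarith
  constructor
  · -- first equation
    have step : ∀ v ∈ J, (d v : ℚ) *
          (((p : ℚ) - 1) * (v : ℚ) + (⌊β * (v : ℚ)⌋ : ℚ)) *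
          (((p : ℚ) - 1) * (v : ℚ) + (⌊β * (v : ℚ)⌋ : ℚ) + 1)
        = (d v : ℚ) *
            (((p : ℚ) - 1) * (v : ℚ) + (⌊β' * (v : ℚ)⌋ : ℚ)) *
            (((p : ℚ) - 1) * (v : ℚ) + (⌊β' * (v : ℚ)⌋ : ℚ) + 1)
          + (if β.den ∣ v then 2 * ((d v : ℚ) *
              (((p : ℚ) - 1) * (v : ℚ) + β * (v : ℚ))) else 0) := by
      intro v hv
      have hkey := key v hv
      by_cases hdvd : β.den ∣ v
      · rw [if_pos hdvd] at hkey ⊢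
        have h1 : (⌊β * (v:ℚ)⌋ : ℚ) = (⌊β' * (v:ℚ)⌋ : ℚ) + 1 := by
          exact_mod_cast congrArg (fun z : ℤ => (z:ℚ)) hkey
        have h2 : (⌊β * (v:ℚ)⌋ : ℚ) = β * v := hintval v hdvd
        rw [h1, ← h2, h1]
        ring
      · rw [if_neg hdvd, add_zero] at hkey
        rw [if_neg hdvd, add_zero, hkey]
    rw [Finset.sum_congr rfl step, Finset.sum_add_distrib, ← Finset.sum_filter,
      ← Finset.mul_sum]
    ring
  · -- second equation
    have step : ∀ v ∈ J, (d v : ℤ) * ⌊β * (v : ℚ)⌋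
        = (d v : ℤ) * ⌊β' * (v : ℚ)⌋ + (if β.den ∣ v then (d v : ℤ) else 0) := by
      intro v hv
      rw [key v hv]
      by_cases hdvd : β.den ∣ v <;> simp [hdvd] <;> ring
    rw [Finset.sum_congr rfl step, Finset.sum_add_distrib, ← Finset.sum_filter]
end
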